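/- arXiv:1506.07022 — 3 statements merged into one kernel-verified Lean document; each statement's English description precedes it below -/
import Mathlib

section
/- Let [λ(j)] be an r-multipartition of n and μ a partition of n. Then K_{[λ(j)]μ} > 0 if and only if the partition λ̃, with parts λ̃_i = Σ_{j=1}^r λ(j)_i, dominates μ. -/
/-- A partition encoded as a weakly decreasing, finitely supported function `ℕ → ℕ`
(0-indexed: `l 0` is the first part). -/
def IsPartition (l : ℕ → ℕ) : Prop :=
  Antitone l ∧ ∃ N, ∀ i, N ≤ i → l i = 0

/-- The size (sum of the parts). -/
noncomputable def psize (l : ℕ → ℕ) : ℕ := ∑ᶠ i, l i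

/-- Dominance order: every partial sum of `l` is at least that of `m`. -/
def Dominates (l m : ℕ → ℕ) : Prop :=
  ∀ k, ∑ i ∈ Finset.range k, m i ≤ ∑ i ∈ Finset.range k, l i

/-- `l` has exactly `h` (nonzero) parts. -/
def PartLength (l : ℕ → ℕ) (h : ℕ) : Prop :=
  (∀ i, i < h → 0 < l i) ∧ ∀ i, h ≤ i → l i = 0

/-- A semistandard Young tableau of shape `l`: positive entries in the cells
`(i, j)` with `j < l i`, zero outside, rows weakly increasing, columns strictly
increasing. -/
def IsSSYT (l : ℕ → ℕ) (T : ℕ → ℕ → ℕ) : Prop :=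
  (∀ i j, j < l i → 1 ≤ T i j) ∧
  (∀ i j, l i ≤ j → T i j = 0) ∧
  (∀ i j k, j ≤ k → k < l i → T i j ≤ T i k) ∧
  (∀ i i' j, i < i' → j < l i' → T i j < T i' j)

/-- The number of cells of `T` (inside shape `l`) with entry `m + 1`. -/
noncomputable def entryCount (l : ℕ → ℕ) (T : ℕ → ℕ → ℕ) (m : ℕ) : ℕ :=
  Set.ncard {p : ℕ × ℕ | p.2 < l p.1 ∧ T p.1 p.2 = m + 1}

/-- `T` has weight `w`: the entry `m + 1` occurs `w m` times. -/
def HasWeight (l : ℕ → ℕ) (T : ℕ → ℕ → ℕ) (w : ℕ → ℕ) : Prop :=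
  ∀ m, entryCount l T m = w m

/-- The Kostka number: the number of semistandard Young tableaux of shape `l`
and weight `w`. -/
noncomputable def kostka (l w : ℕ → ℕ) : ℕ :=
  Set.ncard {T : ℕ → ℕ → ℕ | IsSSYT l T ∧ HasWeight l T w}

/-- A multitableau has total weight `w`. -/
def MultiHasWeight {r : ℕ} (lam : Fin r → ℕ → ℕ) (T : Fin r → ℕ → ℕ → ℕ) (w : ℕ → ℕ) : Prop :=
  ∀ m, (∑ j, entryCount (lam j) (T j) m) = w m

/-- The multipartition Kostka number: the number of semistandard Young
`r`-multitableaux of shape `lam` and total weight `w`. -/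
noncomputable def kostkaMulti {r : ℕ} (lam : Fin r → ℕ → ℕ) (w : ℕ → ℕ) : ℕ :=
  Set.ncard {T : Fin r → ℕ → ℕ → ℕ | (∀ j, IsSSYT (lam j) (T j)) ∧ MultiHasWeight lam T w}

/-- The partition `λ̃` with `λ̃ i = ∑ j, λ(j) i`. -/
def tildePart {r : ℕ} (lam : Fin r → ℕ → ℕ) : ℕ → ℕ := fun i => ∑ j, lam j i

/-- cells of row `i` with entry `m+1` -/
def rowF (l : ℕ → ℕ) (T : ℕ → ℕ → ℕ) (m i : ℕ) : Finset ℕ :=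
  (Finset.range (l i)).filter (fun k => T i k = m + 1)

lemma entryCount_eq {l : ℕ → ℕ} {N : ℕ} (hN : ∀ i, N ≤ i → l i = 0) (T : ℕ → ℕ → ℕ) (m : ℕ) :
    entryCount l T m = ∑ i ∈ Finset.range N, (rowF l T m i).card := by
  classical
  have hset : {p : ℕ × ℕ | p.2 < l p.1 ∧ T p.1 p.2 = m + 1} =
      ↑((Finset.range N).biUnion (fun i => ({i} : Finset ℕ) ×ˢ rowF l T m i)) := by
    ext p
    simp only [Set.mem_setOf_eq, Finset.coe_biUnion, Finset.mem_coe, Finset.mem_biUnion,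
      Finset.mem_range, Finset.mem_product, Finset.mem_singleton, rowF, Finset.mem_filter,
      Set.mem_iUnion]
    constructor
    · rintro ⟨h1, h2⟩
      refine ⟨p.1, ?_, rfl, h1, h2⟩
      by_contra hc
      rw [hN p.1 (le_of_not_gt hc)] at h1; omega
    · rintro ⟨i, _, rfl, h1, h2⟩
      exact ⟨h1, h2⟩
  rw [entryCount, hset, Set.ncard_coe_finset]
  rw [Finset.card_biUnion]
  · apply Finset.sum_congr rfl
    intro i _
    rw [Finset.card_product, Finset.card_singleton, one_mul]
  · intro i _ j _ hij
    apply Finset.disjoint_left.mpr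
    intro p hp hq
    simp only [Finset.mem_product, Finset.mem_singleton] at hp hq
    exact hij (hp.1 ▸ hq.1 ▸ rfl)

lemma entry_ge {l : ℕ → ℕ} {T : ℕ → ℕ → ℕ} (hT : IsSSYT l T) (hl : Antitone l) :
    ∀ i k, k < l i → i + 1 ≤ T i k := by
  intro i
  induction i with
  | zero => exact fun k hk => hT.1 0 k hk
  | succ i ih =>
    intro k hk
    have hk' : k < l i := lt_of_lt_of_le hk (hl (Nat.le_succ i))
    have := hT.2.2.2 i (i+1) k (Nat.lt_succ_self i) hk
    have := ih k hk'
    omega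

lemma entry_le {l : ℕ → ℕ} {T : ℕ → ℕ → ℕ} {N B : ℕ} (hT : IsSSYT l T)
    (hN : ∀ i, N ≤ i → l i = 0) (hB : ∀ m, B ≤ m → entryCount l T m = 0) :
    ∀ i k, k < l i → T i k ≤ B := by
  intro i k hk
  by_contra hc
  push_neg at hc
  have h1 : 1 ≤ T i k := hT.1 i k hk
  have hm : entryCount l T (T i k - 1) = 0 := hB _ (by omega)
  rw [entryCount_eq hN] at hm
  have hiN : i < N := by
    by_contra h
    rw [hN i (le_of_not_gt h)] at hk; omega
  have : (rowF l T (T i k - 1) i).card = 0 :=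
    (Finset.sum_eq_zero_iff.mp hm) i (Finset.mem_range.mpr hiN)
  rw [Finset.card_eq_zero] at this
  have : k ∈ rowF l T (T i k - 1) i := by
    simp [rowF, Finset.mem_filter, Finset.mem_range, hk]
    omega
  simp_all

lemma sum_entryCount_le {l : ℕ → ℕ} {T : ℕ → ℕ → ℕ} {N : ℕ} (hT : IsSSYT l T)
    (hl : Antitone l) (hN : ∀ i, N ≤ i → l i = 0) (k : ℕ) :
    ∑ m ∈ Finset.range k, entryCount l T m ≤ ∑ i ∈ Finset.range k, l i := by
  classical
  set M := max N k with hM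
  have hNM : ∀ i, M ≤ i → l i = 0 := fun i hi => hN i (le_trans (le_max_left _ _) hi)
  calc ∑ m ∈ Finset.range k, entryCount l T m
      = ∑ m ∈ Finset.range k, ∑ i ∈ Finset.range M, (rowF l T m i).card := by
        exact Finset.sum_congr rfl (fun m _ => entryCount_eq hNM T m)
    _ = ∑ i ∈ Finset.range M, ∑ m ∈ Finset.range k, (rowF l T m i).card :=
        Finset.sum_comm
    _ ≤ ∑ i ∈ Finset.range M, (if i < k then l i else 0) := by
        apply Finset.sum_le_sum
        intro i _
        by_cases hik : i < k
        · simp only [hik, if_true]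
          have hdisj : ∀ m ∈ Finset.range k, ∀ m' ∈ Finset.range k, m ≠ m' →
              Disjoint (rowF l T m i) (rowF l T m' i) := by
            intro m _ m' _ hmm'
            apply Finset.disjoint_left.mpr
            intro a ha hb
            simp only [rowF, Finset.mem_filter] at ha hb
            omega
          rw [← Finset.card_biUnion hdisj]
          have : (Finset.range k).biUnion (fun m => rowF l T m i) ⊆ Finset.range (l i) := by
            intro a ha
            simp only [Finset.mem_biUnion, rowF, Finset.mem_filter] at ha
            obtain ⟨m, _, ha, _⟩ := ha
            exact ha
          exact le_trans (Finset.card_le_card this) (by simp)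
        · simp only [hik, if_false]
          apply le_of_eq
          apply Finset.sum_eq_zero
          intro m hm
          rw [Finset.card_eq_zero, Finset.eq_empty_iff_forall_notMem]
          intro a ha
          simp only [rowF, Finset.mem_filter, Finset.mem_range] at ha hm
          have := entry_ge hT hl i a ha.1
          omega
    _ = ∑ i ∈ Finset.range k, l i := by
        rw [← Finset.sum_filter]
        congr 1
        ext i
        simp only [Finset.mem_filter, Finset.mem_range]
        omega

private lemma tele (l : ℕ → ℕ) (s : ℕ) (M : ℕ) :
    ∑ i ∈ Finset.range M, ((l i - s) + min s (l (i+1))) + min s (l 0)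
      = ∑ i ∈ Finset.range M, l i + min s (l M) := by
  induction M with
  | zero => simp
  | succ M ih =>
    rw [Finset.sum_range_succ, Finset.sum_range_succ]
    omega

lemma exists_ssyt : ∀ (N : ℕ) (l w : ℕ → ℕ), Antitone l → Antitone w →
    (∀ i, N ≤ i → l i = 0) → (∀ i, N ≤ i → w i = 0) →
    (∀ k, ∑ i ∈ Finset.range k, w i ≤ ∑ i ∈ Finset.range k, l i) →
    (∑ i ∈ Finset.range N, l i = ∑ i ∈ Finset.range N, w i) →
    ∃ T, IsSSYT l T ∧ HasWeight l T w := by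
  intro N
  induction N with
  | zero =>
    intro l w _ _ hlN hwN _ _
    refine ⟨fun _ _ => 0, ⟨?_, ?_, ?_, ?_⟩, ?_⟩
    · intro i j hj; rw [hlN i (Nat.zero_le i)] at hj; omega
    · intro i j _; rfl
    · intro i j k _ _; exact le_rfl
    · intro i i' j _ hj; rw [hlN i' (Nat.zero_le i')] at hj; omega
    · intro m
      rw [entryCount_eq hlN, Finset.sum_range_zero, hwN m (Nat.zero_le m)]
  | succ N ih =>
    intro l w hl hw hlN hwN hdom hsize
    set s := w N with hs
    have hs0 : s ≤ l 0 := by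
      have h1 := hdom 1
      simp only [Finset.sum_range_one] at h1
      exact le_trans (hw (Nat.zero_le N)) h1
    set l' : ℕ → ℕ := fun i => (l i - s) + min s (l (i+1)) with hl'def
    set w' : ℕ → ℕ := fun i => if i < N then w i else 0 with hw'def
    have hlmono : ∀ i, l (i+1) ≤ l i := fun i => hl (Nat.le_succ i)
    have hl'le : ∀ i, l (i+1) ≤ l' i ∧ l' i ≤ l i := by
      intro i; have := hlmono i; simp only [hl'def]; omega
    have hl'mono : Antitone l' := by
      apply antitone_nat_of_succ_le
      intro i
      have h1 := hlmono i
      have h2 := hlmono (i+1)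
      simp only [hl'def]
      omega
    have hw'mono : Antitone w' := by
      apply antitone_nat_of_succ_le
      intro i
      have : w (i+1) ≤ w i := hw (by omega)
      show w' (i+1) ≤ w' i
      show (if i+1 < N then w (i+1) else 0) ≤ (if i < N then w i else 0)
      split_ifs <;> omega
    have hlNs : l N ≤ s := by
      have h1 := hdom N
      have h2 := hsize
      rw [Finset.sum_range_succ, Finset.sum_range_succ] at h2
      omega
    have hl'N : ∀ i, N ≤ i → l' i = 0 := by
      intro i hi
      rcases Nat.eq_or_lt_of_le hi with h | h
      · have h1 : l (i+1) = 0 := hlN (i+1) (by omega)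
        have h2 : l i ≤ s := h ▸ hlNs
        simp only [hl'def]; omega
      · have h1 : l (i+1) = 0 := hlN (i+1) (by omega)
        have h2 : l i = 0 := hlN i (by omega)
        simp only [hl'def]; omega
    have hw'N : ∀ i, N ≤ i → w' i = 0 := by
      intro i hi
      show (if i < N then w i else 0) = 0
      rw [if_neg (by omega)]
    have hteleN := tele l s N
    have hteleN1 := tele l s (N+1)
    have hmin0 : min s (l 0) = s := min_eq_left hs0
    have hminN : min s (l N) = l N := min_eq_right hlNs
    have hminN1 : min s (l (N+1)) = 0 := by rw [hlN (N+1) le_rfl]; simp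
    rw [hmin0, hminN] at hteleN
    rw [hmin0, hminN1] at hteleN1
    have hsizeN1 : ∑ i ∈ Finset.range N, l i + l N = ∑ i ∈ Finset.range N, w i + s := by
      have := hsize
      rw [Finset.sum_range_succ, Finset.sum_range_succ] at this
      omega
    have hsw' : ∀ k, k ≤ N → ∑ i ∈ Finset.range k, w' i = ∑ i ∈ Finset.range k, w i := by
      intro k hk
      apply Finset.sum_congr rfl
      intro i hi
      simp only [Finset.mem_range] at hi
      simp only [hw'def]
      rw [if_pos (by omega)]
    have hsize' : ∑ i ∈ Finset.range N, l' i = ∑ i ∈ Finset.range N, w' i := by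
      rw [hsw' N le_rfl]
      show ∑ i ∈ Finset.range N, ((l i - s) + min s (l (i+1))) = ∑ i ∈ Finset.range N, w i
      omega
    have hdom' : ∀ k, ∑ i ∈ Finset.range k, w' i ≤ ∑ i ∈ Finset.range k, l' i := by
      intro k
      rcases le_or_gt k N with hk | hk
      · rw [hsw' k hk]
        have htel := tele l s k
        rw [hmin0] at htel
        show ∑ i ∈ Finset.range k, w i ≤ ∑ i ∈ Finset.range k, ((l i - s) + min s (l (i+1)))
        rcases le_or_gt s (l k) with hc | hc
        · rw [min_eq_left hc] at htel
          have := hdom k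
          omega
        · rw [min_eq_right (le_of_lt hc)] at htel
          have hwk : s ≤ w k := hw (by omega : k ≤ N)
          have hd := hdom (k+1)
          rw [Finset.sum_range_succ, Finset.sum_range_succ] at hd
          omega
      · have h1 : ∑ i ∈ Finset.range k, w' i = ∑ i ∈ Finset.range N, w' i := by
          rw [← Finset.sum_subset (Finset.range_subset_range.mpr (le_of_lt hk))]
          intro i _ hi
          exact hw'N i (by simpa using hi)
        have h2 : ∑ i ∈ Finset.range N, l' i ≤ ∑ i ∈ Finset.range k, l' i :=
          Finset.sum_le_sum_of_subset (Finset.range_subset_range.mpr (le_of_lt hk))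
        omega
    obtain ⟨T', hT', hW'⟩ := ih l' w' hl'mono hw'mono hl'N hw'N hdom' hsize'
    have hTB : ∀ i k, k < l' i → T' i k ≤ N := by
      apply entry_le hT' hl'N
      intro m hm
      rw [hW' m]
      show (if m < N then w m else 0) = 0
      rw [if_neg (by omega)]
    set T : ℕ → ℕ → ℕ := fun i k => if k < l' i then T' i k else if k < l i then N + 1 else 0
      with hTdef
    have hTcell : ∀ i k, k < l' i → T i k = T' i k := by
      intro i k hk; simp only [hTdef, if_pos hk]
    have hTstrip : ∀ i k, l' i ≤ k → k < l i → T i k = N + 1 := by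
      intro i k h1 h2; simp only [hTdef]; rw [if_neg (by omega), if_pos h2]
    have hTout : ∀ i k, l i ≤ k → T i k = 0 := by
      intro i k h1; simp only [hTdef]
      rw [if_neg (by have := (hl'le i).2; omega), if_neg (by omega)]
    refine ⟨T, ⟨?_, hTout, ?_, ?_⟩, ?_⟩
    · -- positivity
      intro i j hj
      by_cases h : j < l' i
      · rw [hTcell i j h]; exact hT'.1 i j h
      · rw [hTstrip i j (by omega) hj]; omega
    · -- rows
      intro i j k hjk hk
      by_cases h : k < l' i
      · have hj : j < l' i := by omega
        rw [hTcell i j hj, hTcell i k h]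
        exact hT'.2.2.1 i j k hjk h
      · rw [hTstrip i k (by omega) hk]
        by_cases h2 : j < l' i
        · rw [hTcell i j h2]
          have := hTB i j h2; omega
        · rw [hTstrip i j (by omega) (by omega)]
    · -- columns
      intro i i' j hii' hj
      have hji : j < l' i := by
        have h1 : l i' ≤ l (i+1) := hl (by omega)
        have := (hl'le i).1
        omega
      rw [hTcell i j hji]
      have hTiB := hTB i j hji
      by_cases h : j < l' i'
      · rw [hTcell i' j h]
        exact hT'.2.2.2 i i' j hii' h
      · rw [hTstrip i' j (by omega) hj]
        omega
    · -- weight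
      intro m
      have hl'N1 : ∀ i, N + 1 ≤ i → l' i = 0 := fun i hi => hl'N i (by omega)
      rw [entryCount_eq hlN]
      rcases lt_trichotomy m N with hm | hm | hm
      · have hrow : ∀ i, rowF l T m i = rowF l' T' m i := by
          intro i
          ext a
          simp only [rowF, Finset.mem_filter, Finset.mem_range]
          constructor
          · rintro ⟨h1, h2⟩
            by_cases h3 : a < l' i
            · exact ⟨h3, by rw [← hTcell i a h3]; exact h2⟩
            · rw [hTstrip i a (by omega) h1] at h2; omega
          · rintro ⟨h1, h2⟩
            exact ⟨by have := (hl'le i).2; omega, by rw [hTcell i a h1]; exact h2⟩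
        calc ∑ i ∈ Finset.range (N+1), (rowF l T m i).card
            = ∑ i ∈ Finset.range (N+1), (rowF l' T' m i).card := by
              exact Finset.sum_congr rfl (fun i _ => by rw [hrow])
          _ = entryCount l' T' m := (entryCount_eq hl'N1 T' m).symm
          _ = w' m := hW' m
          _ = w m := by simp only [hw'def]; rw [if_pos hm]
      · subst hm
        have hrow : ∀ i, (rowF l T m i).card = l i - l' i := by
          intro i
          have : rowF l T m i = Finset.Ico (l' i) (l i) := by
            ext a
            simp only [rowF, Finset.mem_filter, Finset.mem_range, Finset.mem_Ico]
            constructor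
            · rintro ⟨h1, h2⟩
              refine ⟨?_, h1⟩
              by_contra h3
              rw [hTcell i a (by omega)] at h2
              have := hTB i a (by omega)
              omega
            · rintro ⟨h1, h2⟩
              exact ⟨h2, hTstrip i a h1 h2⟩
          rw [this, Nat.card_Ico]
        calc ∑ i ∈ Finset.range (m+1), (rowF l T m i).card
            = ∑ i ∈ Finset.range (m+1), (l i - l' i) := by
              exact Finset.sum_congr rfl (fun i _ => hrow i)
          _ = ∑ i ∈ Finset.range (m+1), l i - ∑ i ∈ Finset.range (m+1), l' i := by
              apply Finset.sum_tsub_distrib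
              intro i _
              exact (hl'le i).2
          _ = w m := by
              have h2 : ∑ i ∈ Finset.range (m+1), l' i =
                  ∑ i ∈ Finset.range (m+1), ((l i - s) + min s (l (i+1))) := rfl
              rw [h2]
              omega
      · have hrow : ∀ i, rowF l T m i = ∅ := by
          intro i
          rw [Finset.eq_empty_iff_forall_notMem]
          intro a ha
          simp only [rowF, Finset.mem_filter, Finset.mem_range] at ha
          obtain ⟨h1, h2⟩ := ha
          by_cases h3 : a < l' i
          · rw [hTcell i a h3] at h2; have := hTB i a h3; omega
          · rw [hTstrip i a (by omega) h1] at h2; omega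
        rw [Finset.sum_eq_zero (fun i _ => by rw [hrow i, Finset.card_empty]),
          hwN m (by omega)]

section Split

variable {r : ℕ} (lam : Fin r → ℕ → ℕ)

noncomputable def hgt (j : Fin r) (k : ℕ) : ℕ := sInf {i | lam j i ≤ k}

noncomputable def pos (j : Fin r) (k : ℕ) : ℕ :=
  k + ∑ j' : Fin r, (if j' < j then lam j' (hgt lam j k - 1)
    else if j < j' then lam j' (hgt lam j k) else 0)

variable {lam} {N : ℕ} (hA : ∀ j, Antitone (lam j)) (hN : ∀ j i, N ≤ i → lam j i = 0)

include hA in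
lemma tilde_anti : Antitone (tildePart lam) := by
  intro a b hab
  exact Finset.sum_le_sum (fun j _ => hA j hab)

include hN in
lemma tilde_zero : ∀ i, N ≤ i → tildePart lam i = 0 := by
  intro i hi
  exact Finset.sum_eq_zero (fun j _ => hN j i hi)

include hN in
lemma lam_hgt_le (j : Fin r) (k : ℕ) : lam j (hgt lam j k) ≤ k :=
  Nat.sInf_mem (⟨N, by simp [hN j N le_rfl]⟩ : {i | lam j i ≤ k}.Nonempty)

include hA hN in
lemma lt_hgt_iff (j : Fin r) (k i : ℕ) : i < hgt lam j k ↔ k < lam j i := by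
  constructor
  · intro hi
    by_contra hc
    have h3 : hgt lam j k ≤ i :=
      Nat.sInf_le (show i ∈ {i | lam j i ≤ k} from le_of_not_gt hc)
    omega
  · intro hi
    by_contra hc
    have h1 : lam j i ≤ lam j (hgt lam j k) := hA j (le_of_not_gt hc)
    have h2 := lam_hgt_le hN j k
    omega

include hN in
lemma hgt_anti (j : Fin r) {k k' : ℕ} (hkk : k ≤ k') : hgt lam j k' ≤ hgt lam j k :=
  Nat.sInf_le (show hgt lam j k ∈ {i | lam j i ≤ k'} from le_trans (lam_hgt_le hN j k) hkk)

include hA hN in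
lemma pos_lb {j : Fin r} {k i : ℕ} (_hk : k < lam j i) :
    tildePart lam (hgt lam j k) ≤ pos lam j k := by
  rw [tildePart, pos]
  set h := hgt lam j k with hh
  rw [← Finset.add_sum_erase _ _ (Finset.mem_univ j),
    ← Finset.add_sum_erase _ _ (Finset.mem_univ j)]
  rw [if_neg (lt_irrefl j), if_neg (lt_irrefl j)]
  have h1 : lam j h ≤ k := lam_hgt_le hN j k
  have h2 : ∑ j' ∈ Finset.univ.erase j, lam j' h ≤
      ∑ j' ∈ Finset.univ.erase j, (if j' < j then lam j' (h - 1) else if j < j' then lam j' h else 0) := by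
    apply Finset.sum_le_sum
    intro j' hj'
    have hne : j' ≠ j := Finset.ne_of_mem_erase hj'
    rcases lt_or_gt_of_ne hne with hlt | hgt'
    · rw [if_pos hlt]
      exact hA j' (Nat.sub_le h 1)
    · rw [if_neg (by exact fun hc => absurd hc (asymm hgt')), if_pos hgt']
  omega

include hA hN in
lemma pos_ub {j : Fin r} {k i : ℕ} (hk : k < lam j i) :
    pos lam j k < tildePart lam (hgt lam j k - 1) := by
  have hih0 : i < hgt lam j k := (lt_hgt_iff hA hN j k i).mpr hk
  have hkh0 : k < lam j (hgt lam j k - 1) :=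
    (lt_hgt_iff hA hN j k (hgt lam j k - 1)).mp (by omega)
  rw [tildePart, pos]
  set h := hgt lam j k with hh
  rw [← Finset.add_sum_erase _ _ (Finset.mem_univ j),
    ← Finset.add_sum_erase _ _ (Finset.mem_univ j)]
  rw [if_neg (lt_irrefl j), if_neg (lt_irrefl j)]
  have h2 : ∑ j' ∈ Finset.univ.erase j, (if j' < j then lam j' (h - 1) else if j < j' then lam j' h else 0)
      ≤ ∑ j' ∈ Finset.univ.erase j, lam j' (h - 1) := by
    apply Finset.sum_le_sum
    intro j' hj'
    have hne : j' ≠ j := Finset.ne_of_mem_erase hj'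
    rcases lt_or_gt_of_ne hne with hlt | hgt'
    · rw [if_pos hlt]
    · rw [if_neg (by exact fun hc => absurd hc (asymm hgt')), if_pos hgt']
      exact hA j' (Nat.sub_le h 1)
  omega

include hA hN in
lemma pos_lt_row {j : Fin r} {k i : ℕ} (hk : k < lam j i) :
    pos lam j k < tildePart lam i := by
  have h1 := pos_ub hA hN hk
  have hih : i < hgt lam j k := (lt_hgt_iff hA hN j k i).mpr hk
  have h2 : tildePart lam (hgt lam j k - 1) ≤ tildePart lam i := tilde_anti hA (by omega)
  omega

include hA hN in
lemma pos_mono {j : Fin r} {k k' i : ℕ} (hkk : k ≤ k') (hk' : k' < lam j i) :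
    pos lam j k ≤ pos lam j k' := by
  have hk : k < lam j i := by omega
  have hhh : hgt lam j k' ≤ hgt lam j k := hgt_anti hN j hkk
  rcases Nat.eq_or_lt_of_le hhh with heq | hlt
  · rw [pos, pos, heq]
    omega
  · have h1 := pos_ub hA hN hk
    have h2 := pos_lb hA hN hk'
    have h3 : tildePart lam (hgt lam j k - 1) ≤ tildePart lam (hgt lam j k') :=
      tilde_anti hA (by omega)
    omega

include hA hN in
lemma pos_lt_pos {j j' : Fin r} {k k' i i' : ℕ} (hjj : j < j') (hk : k < lam j i)
    (hk' : k' < lam j' i') (hh : hgt lam j k = hgt lam j' k') :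
    pos lam j k < pos lam j' k' := by
  set h := hgt lam j k with hhdef
  have hih : i < h := (lt_hgt_iff hA hN j k i).mpr hk
  have hkh : k < lam j (h - 1) := (lt_hgt_iff hA hN j k (h-1)).mp (by omega)
  have hk'lb : lam j' h ≤ k' := by
    have := lam_hgt_le hN j' k'
    rw [← hh] at this
    exact this
  have hsF : ∑ j'' : Fin r, ((if j'' < j then lam j'' (h - 1) else if j < j'' then lam j'' h else 0)
        + (if j'' = j then lam j (h-1) else 0))
      = (∑ j'' : Fin r, (if j'' < j then lam j'' (h - 1) else if j < j'' then lam j'' h else 0))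
        + lam j (h-1) := by
    rw [Finset.sum_add_distrib, Finset.sum_ite_eq' Finset.univ j (fun _ => lam j (h-1))]
    simp
  have hsG : ∑ j'' : Fin r, ((if j'' < j' then lam j'' (h - 1) else if j' < j'' then lam j'' h else 0)
        + (if j'' = j' then lam j' h else 0))
      = (∑ j'' : Fin r, (if j'' < j' then lam j'' (h - 1) else if j' < j'' then lam j'' h else 0))
        + lam j' h := by
    rw [Finset.sum_add_distrib, Finset.sum_ite_eq' Finset.univ j' (fun _ => lam j' h)]
    simp
  have key : (∑ j'' : Fin r, (if j'' < j then lam j'' (h - 1) else if j < j'' then lam j'' h else 0))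
        + lam j (h-1)
      ≤ (∑ j'' : Fin r, (if j'' < j' then lam j'' (h - 1) else if j' < j'' then lam j'' h else 0))
        + lam j' h := by
    rw [← hsF, ← hsG]
    apply Finset.sum_le_sum
    intro j'' _
    have hmono : lam j'' h ≤ lam j'' (h-1) := hA j'' (Nat.sub_le h 1)
    by_cases c1 : j'' < j
    · have c2 : j'' < j' := lt_trans c1 hjj
      have c3 : ¬ (j'' = j) := ne_of_lt c1
      have c4 : ¬ (j'' = j') := ne_of_lt c2
      have c5 : ¬ (j < j'') := fun hc => absurd hc (asymm c1)
      have c6 : ¬ (j' < j'') := fun hc => absurd hc (asymm c2)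
      simp [c1, c2, c3, c4]
    · by_cases c2 : j'' = j
      · subst c2
        have c3 : j'' < j' := hjj
        have c4 : ¬ (j'' < j'') := lt_irrefl _
        simp [c3, c4]
      · have c3 : j < j'' := by
          rcases lt_trichotomy j'' j with h1 | h1 | h1
          · exact absurd h1 c1
          · exact absurd h1 c2
          · exact h1
        by_cases c5 : j'' < j'
        · have c6 : ¬ (j'' = j') := ne_of_lt c5
          simp [c1, c2, c3, c5, c6, asymm c3]
          omega
        · by_cases c7 : j'' = j'
          · subst c7
            simp [c1, c2, c3, c5, asymm c3, lt_irrefl]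
          · have c8 : j' < j'' := by
              rcases lt_trichotomy j'' j' with h1 | h1 | h1
              · exact absurd h1 c5
              · exact absurd h1 c7
              · exact h1
            simp [c1, c2, c3, c5, c7, c8, asymm c3, asymm c8]
  have e1 : pos lam j k = k + ∑ j'' : Fin r, (if j'' < j then lam j'' (h - 1) else if j < j'' then lam j'' h else 0) := rfl
  have e2 : pos lam j' k' = k' + ∑ j'' : Fin r, (if j'' < j' then lam j'' (h - 1) else if j' < j'' then lam j'' h else 0) := by
    rw [pos, ← hh]
  omega

include hA hN in
lemma pos_inj {j j' : Fin r} {k k' i i' : ℕ} (hk : k < lam j i) (hk' : k' < lam j' i')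
    (heq : pos lam j k = pos lam j' k') : j = j' ∧ k = k' := by
  have hhg : hgt lam j k = hgt lam j' k' := by
    by_contra hne
    rcases lt_or_gt_of_ne hne with hlt | hgt'
    · have h1 := pos_ub hA hN hk'
      have h2 := pos_lb hA hN hk
      have h3 : tildePart lam (hgt lam j' k' - 1) ≤ tildePart lam (hgt lam j k) :=
        tilde_anti hA (by omega)
      omega
    · have h1 := pos_ub hA hN hk
      have h2 := pos_lb hA hN hk'
      have h3 : tildePart lam (hgt lam j k - 1) ≤ tildePart lam (hgt lam j' k') :=
        tilde_anti hA (by omega)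
      omega
  rcases lt_trichotomy j j' with hjj | hjj | hjj
  · have := pos_lt_pos hA hN hjj hk hk' hhg
    omega
  · subst hjj
    refine ⟨rfl, ?_⟩
    rw [pos, pos, hhg] at heq
    omega
  · have := pos_lt_pos hA hN hjj hk' hk hhg.symm
    omega

variable (lam) in
noncomputable def splitT (S : ℕ → ℕ → ℕ) (j : Fin r) : ℕ → ℕ → ℕ :=
  fun i k => if k < lam j i then S i (pos lam j k) else 0

include hA hN in
lemma split_isSSYT {S : ℕ → ℕ → ℕ} (hS : IsSSYT (tildePart lam) S) (j : Fin r) :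
    IsSSYT (lam j) (splitT lam S j) := by
  refine ⟨?_, ?_, ?_, ?_⟩
  · intro i k hk
    rw [splitT, if_pos hk]
    exact hS.1 i _ (pos_lt_row hA hN hk)
  · intro i k hk
    rw [splitT, if_neg (by omega)]
  · intro i k k' hkk hk'
    simp only [splitT]
    rw [if_pos hk', if_pos (show k < lam j i by omega)]
    exact hS.2.2.1 i _ _ (pos_mono hA hN hkk hk') (pos_lt_row hA hN hk')
  · intro i i' k hii' hk
    have hki : k < lam j i := lt_of_lt_of_le hk (hA j (le_of_lt hii'))
    simp only [splitT]
    rw [if_pos hk, if_pos hki]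
    exact hS.2.2.2 i i' _ hii' (pos_lt_row hA hN hk)

include hA hN in
lemma split_row_card (S : ℕ → ℕ → ℕ) (m i : ℕ) :
    ∑ j, (rowF (lam j) (splitT lam S j) m i).card = (rowF (tildePart lam) S m i).card := by
  classical
  set f : (Σ _ : Fin r, ℕ) → ℕ := fun p => pos lam p.1 p.2 with hf
  set Dfull := Finset.univ.sigma (fun j : Fin r => Finset.range (lam j i)) with hDfull
  have hmemfull : ∀ p : Σ _ : Fin r, ℕ, p ∈ Dfull ↔ p.2 < lam p.1 i := by
    intro p
    simp [hDfull, Finset.mem_sigma]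
  have hinj : Set.InjOn f ↑Dfull := by
    rintro ⟨j1, k1⟩ hp ⟨j2, k2⟩ hq hpq
    rw [Finset.mem_coe, hmemfull] at hp hq
    obtain ⟨h1, h2⟩ := pos_inj hA hN hp hq hpq
    simp only at h1 h2
    subst h1; subst h2; rfl
  have hcardfull : Dfull.card = tildePart lam i := by
    rw [hDfull, Finset.card_sigma]
    simp [tildePart]
  have himagefull : Dfull.image f = Finset.range (tildePart lam i) := by
    apply Finset.eq_of_subset_of_card_le
    · intro c hc
      rw [Finset.mem_image] at hc
      obtain ⟨p, hp, rfl⟩ := hc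
      rw [hmemfull] at hp
      exact Finset.mem_range.mpr (pos_lt_row hA hN hp)
    · rw [Finset.card_range, Finset.card_image_of_injOn hinj, hcardfull]
  set D := Finset.univ.sigma (fun j : Fin r => rowF (lam j) (splitT lam S j) m i) with hD
  have hmemD : ∀ p : Σ _ : Fin r, ℕ, p ∈ D ↔
      p.2 < lam p.1 i ∧ splitT lam S p.1 i p.2 = m + 1 := by
    intro p
    simp [hD, Finset.mem_sigma, rowF, Finset.mem_filter]
  have hDsub : D ⊆ Dfull := by
    intro p hp
    rw [hmemD] at hp
    rw [hmemfull]
    exact hp.1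
  have himD : D.image f = rowF (tildePart lam) S m i := by
    ext c
    simp only [Finset.mem_image, rowF, Finset.mem_filter, Finset.mem_range]
    constructor
    · rintro ⟨p, hp, rfl⟩
      rw [hmemD] at hp
      obtain ⟨h1, h2⟩ := hp
      rw [splitT, if_pos h1] at h2
      exact ⟨pos_lt_row hA hN h1, h2⟩
    · rintro ⟨h1, h2⟩
      have : c ∈ Dfull.image f := himagefull ▸ Finset.mem_range.mpr h1
      rw [Finset.mem_image] at this
      obtain ⟨p, hp, rfl⟩ := this
      rw [hmemfull] at hp
      refine ⟨p, ?_, rfl⟩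
      rw [hmemD]
      exact ⟨hp, by rw [splitT, if_pos hp]; exact h2⟩
  calc ∑ j, (rowF (lam j) (splitT lam S j) m i).card
      = D.card := by rw [hD, Finset.card_sigma]
    _ = (D.image f).card := (Finset.card_image_of_injOn
        (hinj.mono (by exact_mod_cast Finset.coe_subset.mpr hDsub))).symm
    _ = (rowF (tildePart lam) S m i).card := by rw [himD]

include hA hN in
lemma split_weight (S : ℕ → ℕ → ℕ) (m : ℕ) :
    (∑ j, entryCount (lam j) (splitT lam S j) m) = entryCount (tildePart lam) S m := by
  calc ∑ j, entryCount (lam j) (splitT lam S j) m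
      = ∑ j, ∑ i ∈ Finset.range N, (rowF (lam j) (splitT lam S j) m i).card :=
        Finset.sum_congr rfl (fun j _ => entryCount_eq (hN j) _ m)
    _ = ∑ i ∈ Finset.range N, ∑ j, (rowF (lam j) (splitT lam S j) m i).card :=
        Finset.sum_comm
    _ = ∑ i ∈ Finset.range N, (rowF (tildePart lam) S m i).card :=
        Finset.sum_congr rfl (fun i _ => split_row_card hA hN S m i)
    _ = entryCount (tildePart lam) S m := (entryCount_eq (tilde_zero hN) S m).symm

end Split

lemma psize_eq {l : ℕ → ℕ} {N : ℕ} (h : ∀ i, N ≤ i → l i = 0) :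
    psize l = ∑ i ∈ Finset.range N, l i := by
  apply finsum_eq_sum_of_support_subset
  intro i hi
  simp only [Function.mem_support] at hi
  simp only [Finset.coe_range, Set.mem_Iio]
  by_contra h'
  exact hi (h i (le_of_not_gt h'))

lemma multi_finite {r : ℕ} (lam : Fin r → ℕ → ℕ) (mu : ℕ → ℕ) {B : ℕ}
    (hA : ∀ j, Antitone (lam j)) (hB1 : ∀ j i, B ≤ i → lam j i = 0)
    (hB2 : ∀ j, lam j 0 ≤ B) (hB3 : ∀ m, B ≤ m → mu m = 0) :
    {T : Fin r → ℕ → ℕ → ℕ | (∀ j, IsSSYT (lam j) (T j)) ∧ MultiHasWeight lam T mu}.Finite := by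
  classical
  apply Set.Finite.of_finite_image
    (f := fun (T : Fin r → ℕ → ℕ → ℕ) (j : Fin r) (i : Fin B) (k : Fin B) =>
      (⟨min (T j i k) B, Nat.lt_succ_of_le (min_le_right _ _)⟩ : Fin (B+1)))
    (Set.toFinite _)
  intro T hT T' hT' hΦeq
  simp only [Set.mem_setOf_eq] at hT hT'
  funext j i k
  by_cases hc : k < lam j i
  · have hiB : i < B := by
      by_contra h
      rw [hB1 j i (le_of_not_gt h)] at hc; omega
    have hkB : k < B := by
      have h1 : lam j i ≤ lam j 0 := hA j (Nat.zero_le i)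
      have h2 := hB2 j
      omega
    have hent : ∀ (U : Fin r → ℕ → ℕ → ℕ), (∀ j, IsSSYT (lam j) (U j)) →
        MultiHasWeight lam U mu → U j i k ≤ B := by
      intro U h1 h2
      apply entry_le (h1 j) (hB1 j) _ i k hc
      intro m hm
      have h3 := h2 m
      rw [hB3 m hm] at h3
      exact Finset.sum_eq_zero_iff.mp h3 j (Finset.mem_univ j)
    have e1 := hent T hT.1 hT.2
    have e2 := hent T' hT'.1 hT'.2
    have e3 := congrFun (congrFun (congrFun hΦeq j) ⟨i, hiB⟩) ⟨k, hkB⟩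
    simp only [Fin.mk.injEq] at e3
    omega
  · rw [(hT.1 j).2.1 i k (le_of_not_gt hc), (hT'.1 j).2.1 i k (le_of_not_gt hc)]

theorem stmt12 (r n : ℕ) (lam : Fin r → ℕ → ℕ) (mu : ℕ → ℕ)
    (hlp : ∀ j, IsPartition (lam j)) (hln : (∑ j, psize (lam j)) = n)
    (hmp : IsPartition mu) (hmn : psize mu = n) :
    0 < kostkaMulti lam mu ↔ Dominates (tildePart lam) mu := by
  classical
  have hA : ∀ j, Antitone (lam j) := fun j => (hlp j).1
  obtain ⟨Nm, hNm⟩ := hmp.2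
  set f : Fin r → ℕ := fun j => Classical.choose (hlp j).2 with hfd
  have hfs : ∀ j i, f j ≤ i → lam j i = 0 := fun j => Classical.choose_spec (hlp j).2
  set N0 : ℕ := max Nm (Finset.univ.sup f) with hN0
  have hNlam : ∀ j i, N0 ≤ i → lam j i = 0 := by
    intro j i hi
    apply hfs j i
    calc f j ≤ Finset.univ.sup f := Finset.le_sup (Finset.mem_univ j)
      _ ≤ N0 := le_max_right _ _
      _ ≤ i := hi
  have hNmu : ∀ m, N0 ≤ m → mu m = 0 :=
    fun m hm => hNm m (le_trans (le_max_left _ _) hm)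
  constructor
  · -- positivity → dominance
    intro hpos
    have hne : {T : Fin r → ℕ → ℕ → ℕ |
        (∀ j, IsSSYT (lam j) (T j)) ∧ MultiHasWeight lam T mu}.Nonempty :=
      Set.nonempty_of_ncard_ne_zero (show kostkaMulti lam mu ≠ 0 by omega)
    obtain ⟨T, hT⟩ := hne
    simp only [Set.mem_setOf_eq] at hT
    intro k
    calc ∑ i ∈ Finset.range k, mu i
        = ∑ m ∈ Finset.range k, ∑ j, entryCount (lam j) (T j) m :=
          Finset.sum_congr rfl (fun m _ => (hT.2 m).symm)
      _ = ∑ j, ∑ m ∈ Finset.range k, entryCount (lam j) (T j) m := Finset.sum_comm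
      _ ≤ ∑ j, ∑ i ∈ Finset.range k, lam j i :=
          Finset.sum_le_sum (fun j _ =>
            sum_entryCount_le (hT.1 j) (hA j) (hNlam j) k)
      _ = ∑ i ∈ Finset.range k, tildePart lam i := by
          rw [Finset.sum_comm]
          rfl
  · -- dominance → positivity
    intro hdom
    have hsz : ∑ i ∈ Finset.range N0, tildePart lam i = ∑ i ∈ Finset.range N0, mu i := by
      calc ∑ i ∈ Finset.range N0, tildePart lam i
          = ∑ j, ∑ i ∈ Finset.range N0, lam j i := by
            rw [Finset.sum_comm]; rfl
        _ = ∑ j, psize (lam j) :=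
            Finset.sum_congr rfl (fun j _ => (psize_eq (hNlam j)).symm)
        _ = n := hln
        _ = psize mu := hmn.symm
        _ = ∑ i ∈ Finset.range N0, mu i := psize_eq hNmu
    obtain ⟨S, hS, hW⟩ := exists_ssyt N0 (tildePart lam) mu (tilde_anti hA) hmp.1
      (tilde_zero hNlam) hNmu hdom hsz
    have hB2 : ∀ j, lam j 0 ≤ N0 + tildePart lam 0 := by
      intro j
      calc lam j 0 ≤ tildePart lam 0 :=
            Finset.single_le_sum (f := fun j => lam j 0) (fun _ _ => Nat.zero_le _)
              (Finset.mem_univ j)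
        _ ≤ N0 + tildePart lam 0 := Nat.le_add_left _ _
    have hfin := multi_finite lam mu (B := N0 + tildePart lam 0) hA
      (fun j i hi => hNlam j i (by omega)) hB2 (fun m hm => hNmu m (by omega))
    rw [kostkaMulti, Set.ncard_pos hfin]
    exact ⟨splitT lam S, fun j => split_isSSYT hA hNlam hS j,
      fun m => (split_weight hA hNlam S m).trans (hW m)⟩
end

section
/- Let [λ(j)] be an r-multipartition of n and μ a partition of n, and let λ̃ be the partition with parts λ̃_i = Σ_{j=1}^r λ(j)_i. Then K_{[λ(j)]μ} ≥ K_{λ̃ μ}. In particular, K_{[λ(j)]μ} = 1 implies K_{λ̃ μ} = 1. -/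
open Finset

theorem Finset.mem_iff_lt_card_of_isLowerSet {S : Finset ℕ} (hS : IsLowerSet (S : Set ℕ))
    {c : ℕ} : c ∈ S ↔ c < #S := by
  rcases hS.eq_univ_or_Iio with h | ⟨a, h⟩
  · exact absurd (h ▸ S.finite_toSet) Set.infinite_univ
  · have hSa : S = range a := by
      ext x
      simpa using Set.ext_iff.mp h x
    simp [hSa]

theorem Finset.exists_sum_eq_of_sum_le_of_le_sum {ι : Type*} (s : Finset ι) {a b : ι → ℕ}
    {t : ℕ} (hab : ∀ j ∈ s, a j ≤ b j) (ha : ∑ j ∈ s, a j ≤ t) (hb : t ≤ ∑ j ∈ s, b j) :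
    ∃ c : ι → ℕ, (∀ j ∈ s, a j ≤ c j ∧ c j ≤ b j) ∧ ∑ j ∈ s, c j = t := by
  classical
  induction s using Finset.induction_on generalizing t with
  | empty => exact ⟨0, by simp, by simp only [sum_empty, nonpos_iff_eq_zero] at hb ⊢; exact hb.symm⟩
  | insert j s hj ih =>
    rw [sum_insert hj] at ha hb
    have hs : ∑ k ∈ s, a k ≤ ∑ k ∈ s, b k := sum_le_sum fun k hk => hab k (mem_insert_of_mem hk)
    have hj' := hab j (mem_insert_self j s)
    -- give `j` as little as possible, so that the rest of `s` can still absorb `t`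
    set x := max (a j) (t - ∑ k ∈ s, b k)
    obtain ⟨c, hc, hsum⟩ := ih (t := t - x) (fun k hk => hab k (mem_insert_of_mem hk))
      (by omega) (by omega)
    refine ⟨Function.update c j x, ?_, ?_⟩
    · intro k hk
      rcases mem_insert.mp hk with rfl | hk
      · simp only [Function.update_self]
        omega
      · rw [Function.update_of_ne (ne_of_mem_of_not_mem hk hj)]
        exact hc k hk
    · rw [sum_insert hj, sum_update_of_notMem hj, hsum, Function.update_self]
      omega

def IsHorizontalStrip (α β : ℕ → ℕ) : Prop :=
  ∀ i, α i ≤ β i ∧ β (i + 1) ≤ α i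

namespace IsHorizontalStrip

variable {α β : ℕ → ℕ}

theorem antitone_left (h : IsHorizontalStrip α β) : Antitone α :=
  antitone_nat_of_succ_le fun i => (h (i + 1)).1.trans (h i).2

theorem antitone_right (h : IsHorizontalStrip α β) : Antitone β :=
  antitone_nat_of_succ_le fun i => (h i).2.trans (h i).1

theorem refl (hα : Antitone α) : IsHorizontalStrip α α :=
  fun i => ⟨le_rfl, hα i.le_succ⟩

theorem sum {ι : Type*} [Fintype ι] {α β : ι → ℕ → ℕ}
    (h : ∀ j, IsHorizontalStrip (α j) (β j)) :
    IsHorizontalStrip (∑ j, α j) (∑ j, β j) := fun i => by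
  simp only [Finset.sum_apply]
  exact ⟨sum_le_sum fun j _ => (h j i).1, sum_le_sum fun j _ => (h j i).2⟩

theorem exists_split {ι : Type*} [Fintype ι] {β : ℕ → ℕ} {α : ι → ℕ → ℕ}
    (h : IsHorizontalStrip β (∑ j, α j)) (hα : ∀ j, Antitone (α j)) :
    ∃ b : ι → ℕ → ℕ, (∀ j, IsHorizontalStrip (b j) (α j)) ∧ ∑ j, b j = β := by
  have hrow (i : ℕ) := Finset.exists_sum_eq_of_sum_le_of_le_sum univ
    (a := fun j => α j (i + 1)) (b := fun j => α j i) (t := β i)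
    (fun j _ => hα j i.le_succ) (by simpa using (h i).2) (by simpa using (h i).1)
  choose c hc hsum using hrow
  refine ⟨fun j i => c i j, fun j i => (hc i j (mem_univ j)).symm, ?_⟩
  ext i
  simpa using hsum i

end IsHorizontalStrip

/-- `ch m` is the shape filled by the entries `≤ m` of a tableau of shape `l` whose entries are
at most `K`. -/
structure IsShapeChain (l : ℕ → ℕ) (ch : ℕ → ℕ → ℕ) (K : ℕ) : Prop where
  zero : ch 0 = 0
  strip : ∀ m, IsHorizontalStrip (ch m) (ch (m + 1))
  eventually_eq : ∀ m, K ≤ m → ch m = l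

namespace IsShapeChain

variable {l : ℕ → ℕ} {ch : ℕ → ℕ → ℕ} {K : ℕ}

theorem monotone (h : IsShapeChain l ch K) : Monotone ch :=
  monotone_nat_of_le_succ fun m i => (h.strip m i).1

theorem le_shape (h : IsShapeChain l ch K) (m : ℕ) : ch m ≤ l :=
  h.eventually_eq (max m K) (le_max_right m K) ▸ h.monotone (le_max_left m K)

theorem antitone_shape (h : IsShapeChain l ch K) : Antitone l :=
  h.eventually_eq K le_rfl ▸ (h.strip K).antitone_left

theorem sum {ι : Type*} [Fintype ι] {l : ι → ℕ → ℕ} {ch : ι → ℕ → ℕ → ℕ}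
    (h : ∀ j, IsShapeChain (l j) (ch j) K) : IsShapeChain (∑ j, l j) (∑ j, ch j) K where
  zero := by simp [Finset.sum_apply, (h _).zero]
  strip m := by simpa only [Finset.sum_apply] using IsHorizontalStrip.sum fun j => (h j).strip m
  eventually_eq m hm := by simp only [Finset.sum_apply, (h _).eventually_eq m hm]

theorem truncate (h : IsShapeChain l ch (K + 1)) :
    IsShapeChain (ch K) (fun m => ch (min m K)) K where
  zero := by simpa using h.zero
  strip m := by
    rcases lt_or_ge m K with hm | hm
    · rw [min_eq_left hm.le, min_eq_left hm]
      exact h.strip m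
    · rw [min_eq_right hm, min_eq_right (hm.trans m.le_succ)]
      exact .refl (h.strip K).antitone_left
  eventually_eq m hm := by rw [min_eq_right hm]

theorem extend {β : ℕ → ℕ} (h : IsShapeChain β ch K) (hβ : IsHorizontalStrip β l) :
    IsShapeChain l (fun m => if m ≤ K then ch m else l) (K + 1) where
  zero := by simpa using h.zero
  strip m := by
    rcases lt_trichotomy m K with hm | rfl | hm
    · simpa [hm.le, Nat.succ_le_of_lt hm] using h.strip m
    · simpa [h.eventually_eq m le_rfl] using hβ
    · simpa [hm.not_ge, (hm.trans m.lt_succ_self).not_ge] using .refl hβ.antitone_right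
  eventually_eq m hm := by simp [show ¬m ≤ K by omega]

theorem exists_split {ι : Type*} [Fintype ι] {α : ι → ℕ → ℕ} {ν : ℕ → ℕ → ℕ}
    (h : IsShapeChain (∑ j, α j) ν K) (hα : ∀ j, Antitone (α j)) :
    ∃ ch : ι → ℕ → ℕ → ℕ, (∀ j, IsShapeChain (α j) (ch j) K) ∧ ∑ j, ch j = ν := by
  induction K generalizing α ν with
  | zero =>
    have hα0 (j : ι) : α j = 0 := by
      have h0 := h.zero ▸ h.eventually_eq 0 le_rfl
      funext i
      have hi : ∀ k, α k i = 0 := by simpa using congrFun h0.symm i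
      exact hi j
    refine ⟨fun j _ => α j, fun j => ⟨hα0 j, fun _ => .refl (hα j), fun _ _ => rfl⟩, ?_⟩
    funext m
    simpa [Finset.sum_fn] using (h.eventually_eq m (Nat.zero_le m)).symm
  | succ K ih =>
    obtain ⟨β, hβ, hβsum⟩ := IsHorizontalStrip.exists_split
      (h.eventually_eq (K + 1) le_rfl ▸ h.strip K) hα
    obtain ⟨ch, hch, hchsum⟩ := ih (hβsum ▸ h.truncate) fun j => (hβ j).antitone_left
    refine ⟨fun j m => if m ≤ K then ch j m else α j, fun j => (hch j).extend (hβ j), ?_⟩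
    funext m
    rcases le_or_gt m K with hm | hm
    · simpa [Finset.sum_fn, hm, min_eq_left hm] using congrFun hchsum m
    · simpa [Finset.sum_fn, hm.not_ge] using (h.eventually_eq m hm).symm

end IsShapeChain

def shapeLE (l : ℕ → ℕ) (T : ℕ → ℕ → ℕ) (m : ℕ) : ℕ → ℕ :=
  fun i => #{c ∈ range (l i) | T i c ≤ m}

noncomputable def ofChain (l : ℕ → ℕ) (ch : ℕ → ℕ → ℕ) : ℕ → ℕ → ℕ :=
  fun i c => if c < l i then sInf {m | c < ch m i} else 0

section Tableau

variable {l : ℕ → ℕ} {T : ℕ → ℕ → ℕ} {ch : ℕ → ℕ → ℕ} {K : ℕ}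

theorem IsSSYT.lt_shapeLE_iff (hT : IsSSYT l T) {m i c : ℕ} :
    c < shapeLE l T m i ↔ c < l i ∧ T i c ≤ m := by
  rw [shapeLE, ← Finset.mem_iff_lt_card_of_isLowerSet, mem_filter, mem_range]
  intro b a hab hb
  simp only [coe_filter, mem_range, Set.mem_ofPred_eq] at hb ⊢
  exact ⟨hab.trans_lt hb.1, (hT.2.2.1 i a b hab hb.1).trans hb.2⟩

theorem IsSSYT.isShapeChain_shapeLE (hT : IsSSYT l T) (hl : Antitone l)
    (hK : ∀ i c, c < l i → T i c ≤ K) : IsShapeChain l (shapeLE l T) K where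
  zero := by
    funext i
    by_contra hpos
    obtain ⟨hc, hle⟩ := hT.lt_shapeLE_iff.mp (Nat.pos_of_ne_zero hpos)
    have := hT.1 i 0 hc
    omega
  strip m i := by
    refine ⟨le_of_forall_lt fun c hc => ?_, le_of_forall_lt fun c hc => ?_⟩
    · obtain ⟨hcl, hcm⟩ := hT.lt_shapeLE_iff.mp hc
      exact hT.lt_shapeLE_iff.mpr ⟨hcl, hcm.trans m.le_succ⟩
    · -- the entry above a cell with entry `≤ m + 1` is `≤ m`
      obtain ⟨hcl, hcm⟩ := hT.lt_shapeLE_iff.mp hc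
      have hcol := hT.2.2.2 i (i + 1) c i.lt_succ_self hcl
      exact hT.lt_shapeLE_iff.mpr ⟨hcl.trans_le (hl i.le_succ), by omega⟩
  eventually_eq m hm := by
    funext i
    rw [shapeLE, filter_true_of_mem fun c hc => (hK i c (mem_range.mp hc)).trans hm, card_range]

theorem ofChain_shapeLE (hT : IsSSYT l T) : ofChain l (shapeLE l T) = T := by
  funext i c
  by_cases hc : c < l i
  · have hset : {m | c < shapeLE l T m i} = Set.Ici (T i c) := by
      ext m
      simp [hT.lt_shapeLE_iff, hc]
    rw [ofChain, if_pos hc, hset, csInf_Ici]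
  · rw [ofChain, if_neg hc, hT.2.1 i c (not_lt.mp hc)]

namespace IsShapeChain

theorem ofChain_le_iff (h : IsShapeChain l ch K) {i c : ℕ} (hc : c < l i) (m : ℕ) :
    ofChain l ch i c ≤ m ↔ c < ch m i := by
  have hne : {m | c < ch m i}.Nonempty := ⟨K, by rwa [Set.mem_ofPred_eq, h.eventually_eq K le_rfl]⟩
  rw [ofChain, if_pos hc]
  exact ⟨fun hm => (Nat.sInf_mem hne).trans_le (h.monotone hm i), fun hm => Nat.sInf_le hm⟩

theorem lt_ofChain_succ (h : IsShapeChain l ch K) {i c : ℕ} (hc : c < l (i + 1)) :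
    ofChain l ch i c < ofChain l ch (i + 1) c := by
  have hmem := (h.ofChain_le_iff hc _).mp le_rfl
  obtain ⟨m, hm⟩ : ∃ m, ofChain l ch (i + 1) c = m + 1 := by
    refine Nat.exists_eq_succ_of_ne_zero fun h0 => ?_
    rw [h0, h.zero] at hmem
    exact Nat.not_lt_zero c hmem
  rw [hm] at hmem ⊢
  have hcm : c < ch m i := hmem.trans_le (h.strip m i).2
  exact Nat.lt_succ_of_le ((h.ofChain_le_iff (hcm.trans_le (h.le_shape m i)) m).mpr hcm)

theorem isSSYT_ofChain (h : IsShapeChain l ch K) : IsSSYT l (ofChain l ch) := by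
  refine ⟨fun i c hc => ?_, fun i c hc => ?_, fun i a b hab hb => ?_, fun i i' c hii' hc => ?_⟩
  · by_contra! h0
    have := (h.ofChain_le_iff hc 0).mp (Nat.lt_one_iff.mp h0).le
    simp [h.zero] at this
  · rw [ofChain, if_neg hc.not_gt]
  · exact (h.ofChain_le_iff (hab.trans_lt hb) _).mpr
      (hab.trans_lt ((h.ofChain_le_iff hb _).mp le_rfl))
  · induction i', hii' using Nat.le_induction with
    | base => exact h.lt_ofChain_succ hc
    | succ i' hi ih =>
      exact (ih (hc.trans_le (h.antitone_shape i'.le_succ))).trans (h.lt_ofChain_succ hc)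

theorem shapeLE_ofChain (h : IsShapeChain l ch K) : shapeLE l (ofChain l ch) = ch := by
  funext m i
  have hrange : {c ∈ range (l i) | ofChain l ch i c ≤ m} = range (ch m i) := by
    ext c
    simp only [mem_filter, mem_range]
    exact ⟨fun ⟨hc, hcm⟩ => (h.ofChain_le_iff hc m).mp hcm,
      fun hc => have hcl := hc.trans_le (h.le_shape m i); ⟨hcl, (h.ofChain_le_iff hcl m).mpr hc⟩⟩
  rw [shapeLE, hrange, card_range]

end IsShapeChain

end Tableau

section Weight

variable {l : ℕ → ℕ} {T : ℕ → ℕ → ℕ} {N : ℕ}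

theorem entryCount_eq_sum (hN : ∀ i, N ≤ i → l i = 0) (m : ℕ) :
    entryCount l T m = ∑ i ∈ range N, #{c ∈ range (l i) | T i c = m + 1} := by
  have hcells : {p : ℕ × ℕ | p.2 < l p.1 ∧ T p.1 p.2 = m + 1} =
      (((range N).sigma (fun i => {c ∈ range (l i) | T i c = m + 1})).map
        (Equiv.sigmaEquivProd ℕ ℕ).toEmbedding : Set (ℕ × ℕ)) := by
    ext ⟨i, c⟩
    simp only [Set.mem_ofPred_eq, coe_map, Set.mem_image, mem_coe, mem_sigma, mem_range,
      mem_filter, Sigma.exists, Equiv.coe_toEmbedding, Equiv.sigmaEquivProd_apply, Prod.mk.injEq]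
    constructor
    · rintro ⟨hc, hT⟩
      have hi : i < N := by
        by_contra hi
        rw [hN i (not_lt.mp hi)] at hc
        exact Nat.not_lt_zero c hc
      exact ⟨i, c, ⟨hi, hc, hT⟩, rfl, rfl⟩
    · rintro ⟨i, c, ⟨-, hc, hT⟩, rfl, rfl⟩
      exact ⟨hc, hT⟩
  rw [entryCount, hcells, Set.ncard_coe_finset, card_map, card_sigma]

theorem entryCount_add_sum_shapeLE (hN : ∀ i, N ≤ i → l i = 0) (m : ℕ) :
    entryCount l T m + ∑ i ∈ range N, shapeLE l T m i =
      ∑ i ∈ range N, shapeLE l T (m + 1) i := by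
  rw [entryCount_eq_sum hN, ← sum_add_distrib]
  refine sum_congr rfl fun i _ => ?_
  rw [shapeLE, shapeLE, ← card_union_of_disjoint (disjoint_filter.mpr fun c _ h => by omega),
    ← filter_or]
  congr 1
  ext c
  simp only [mem_filter]
  exact and_congr_right fun _ => by omega

theorem le_of_entryCount_eq_zero (hN : ∀ i, N ≤ i → l i = 0) {K : ℕ}
    (hK : ∀ m, K ≤ m → entryCount l T m = 0) {i c : ℕ} (hc : c < l i) : T i c ≤ K := by
  by_contra! hlt
  have hzero := entryCount_eq_sum hN (T := T) (T i c - 1) ▸ hK (T i c - 1) (by omega)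
  have hi : i < N := by
    by_contra hi
    rw [hN i (not_lt.mp hi)] at hc
    exact Nat.not_lt_zero c hc
  have hrow := sum_eq_zero_iff.mp hzero i (mem_range.mpr hi)
  rw [card_eq_zero, filter_eq_empty_iff] at hrow
  exact hrow (mem_range.mpr hc) (by omega)

theorem sum_entryCount_eq {ι : Type*} [Fintype ι] {l : ι → ℕ → ℕ} {S : ι → ℕ → ℕ → ℕ}
    (hN : ∀ j i, N ≤ i → l j i = 0)
    (h : ∑ j, shapeLE (l j) (S j) = shapeLE (∑ j, l j) T) (m : ℕ) :
    ∑ j, entryCount (l j) (S j) m = entryCount (∑ j, l j) T m := by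
  have hN' : ∀ i, N ≤ i → (∑ j, l j) i = 0 := fun i hi => by simp [hN _ i hi]
  have hsize (m : ℕ) : ∑ i ∈ range N, shapeLE (∑ j, l j) T m i =
      ∑ j, ∑ i ∈ range N, shapeLE (l j) (S j) m i := by
    rw [← h, sum_comm]
    simp only [Finset.sum_apply]
  apply Nat.add_right_cancel (m := ∑ i ∈ range N, shapeLE (∑ j, l j) T m i)
  calc ∑ j, entryCount (l j) (S j) m + ∑ i ∈ range N, shapeLE (∑ j, l j) T m i
      = ∑ j, (entryCount (l j) (S j) m + ∑ i ∈ range N, shapeLE (l j) (S j) m i) := by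
        rw [hsize, sum_add_distrib]
    _ = ∑ j, ∑ i ∈ range N, shapeLE (l j) (S j) (m + 1) i :=
        sum_congr rfl fun j _ => entryCount_add_sum_shapeLE (hN j) m
    _ = entryCount (∑ j, l j) T m + ∑ i ∈ range N, shapeLE (∑ j, l j) T m i := by
        rw [← hsize, entryCount_add_sum_shapeLE hN']

end Weight

theorem finite_setOf_isSSYT {l : ℕ → ℕ} (hl : IsPartition l) (K : ℕ) :
    {T | IsSSYT l T ∧ ∀ i c, c < l i → T i c ≤ K}.Finite := by
  obtain ⟨N, hN⟩ := hl.2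
  have hbox {i c : ℕ} (hc : c < l i) : i < N ∧ c < l 0 := by
    refine ⟨not_le.mp fun hi => ?_, hc.trans_le (hl.1 (Nat.zero_le i))⟩
    rw [hN i hi] at hc
    exact Nat.not_lt_zero c hc
  refine (Set.finite_range fun (g : Fin N → Fin (l 0) → Fin (K + 1)) i c =>
    if h : i < N ∧ c < l 0 then (g ⟨i, h.1⟩ ⟨c, h.2⟩ : ℕ) else 0).subset ?_
  rintro T ⟨hT, hK⟩
  refine ⟨fun i c => ⟨if c < l i then T i c else 0, ?_⟩, ?_⟩
  · split_ifs with hc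
    · exact Nat.lt_succ_of_le (hK i c hc)
    · exact K.succ_pos
  · funext i c
    by_cases hc : c < l i
    · simp [hbox hc, hc]
    · simp [hc, hT.2.1 i c (not_lt.mp hc)]

section Merge

variable {r : ℕ} {lam : Fin r → ℕ → ℕ} {mu : ℕ → ℕ} {K : ℕ}

theorem tildePart_eq_sum (lam : Fin r → ℕ → ℕ) : tildePart lam = ∑ j, lam j := by
  funext i
  simp [tildePart, Finset.sum_apply]

theorem exists_forall_le_eq_zero_of_isPartition (hlp : ∀ j, IsPartition (lam j)) :
    ∃ N, ∀ j i, N ≤ i → lam j i = 0 := by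
  choose N hN using fun j => (hlp j).2
  obtain ⟨M, hM⟩ := Finite.exists_le N
  exact ⟨M, fun j i hi => hN j i ((hM j).trans hi)⟩

noncomputable def mergeMultitableau (lam : Fin r → ℕ → ℕ) (S : Fin r → ℕ → ℕ → ℕ) :
    ℕ → ℕ → ℕ :=
  ofChain (∑ j, lam j) (∑ j, shapeLE (lam j) (S j))

theorem image_mergeMultitableau (hlp : ∀ j, IsPartition (lam j))
    (hK : ∀ m, K ≤ m → mu m = 0) :
    mergeMultitableau lam '' {S | (∀ j, IsSSYT (lam j) (S j)) ∧ MultiHasWeight lam S mu} =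
      {T | IsSSYT (tildePart lam) T ∧ HasWeight (tildePart lam) T mu} := by
  obtain ⟨N, hN⟩ := exists_forall_le_eq_zero_of_isPartition hlp
  have hN' : ∀ i, N ≤ i → (∑ j, lam j) i = 0 := fun i hi => by simp [hN _ i hi]
  have hanti : Antitone (∑ j, lam j) := fun a b hab => by
    simpa only [Finset.sum_apply] using sum_le_sum fun j _ => (hlp j).1 hab
  rw [tildePart_eq_sum]
  ext T
  constructor
  · rintro ⟨S, ⟨hS, hw⟩, rfl⟩
    have hSK (j : Fin r) (m : ℕ) (hm : K ≤ m) : entryCount (lam j) (S j) m = 0 :=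
      sum_eq_zero_iff.mp ((hw m).trans (hK m hm)) j (mem_univ j)
    have hch := IsShapeChain.sum fun j => (hS j).isShapeChain_shapeLE (hlp j).1
      fun i c hc => le_of_entryCount_eq_zero (hN j) (hSK j) hc
    refine ⟨hch.isSSYT_ofChain, fun m => ?_⟩
    rw [mergeMultitableau, ← sum_entryCount_eq hN hch.shapeLE_ofChain.symm, hw m]
  · rintro ⟨hT, hw⟩
    have hν := hT.isShapeChain_shapeLE hanti fun i c hc =>
      le_of_entryCount_eq_zero hN' (fun m hm => (hw m).trans (hK m hm)) hc
    obtain ⟨ch, hch, hsum⟩ := hν.exists_split fun j => (hlp j).1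
    have hshape : ∑ j, shapeLE (lam j) (ofChain (lam j) (ch j)) = shapeLE (∑ j, lam j) T := by
      simp only [(hch _).shapeLE_ofChain, hsum]
    refine ⟨fun j => ofChain (lam j) (ch j), ⟨fun j => (hch j).isSSYT_ofChain, fun m => ?_⟩, ?_⟩
    · rw [sum_entryCount_eq hN hshape, hw m]
    · rw [mergeMultitableau, hshape, ofChain_shapeLE hT]

theorem finite_setOf_multiSSYT (hlp : ∀ j, IsPartition (lam j)) (hK : ∀ m, K ≤ m → mu m = 0) :
    {S | (∀ j, IsSSYT (lam j) (S j)) ∧ MultiHasWeight lam S mu}.Finite := by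
  obtain ⟨N, hN⟩ := exists_forall_le_eq_zero_of_isPartition hlp
  refine (Set.Finite.pi fun j => finite_setOf_isSSYT (hlp j) K).subset ?_
  rintro S ⟨hS, hw⟩ j -
  refine ⟨hS j, fun i c hc => le_of_entryCount_eq_zero (hN j) (fun m hm => ?_) hc⟩
  exact sum_eq_zero_iff.mp ((hw m).trans (hK m hm)) j (mem_univ j)

end Merge

theorem stmt13_general (r : ℕ) (lam : Fin r → ℕ → ℕ) (mu : ℕ → ℕ)
    (hlp : ∀ j, IsPartition (lam j)) (hmp : IsPartition mu) :
    kostka (tildePart lam) mu ≤ kostkaMulti lam mu ∧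
      (kostkaMulti lam mu = 1 → kostka (tildePart lam) mu = 1) := by
  obtain ⟨K, hK⟩ := hmp.2
  have himage := image_mergeMultitableau hlp hK
  have hfin := finite_setOf_multiSSYT hlp hK
  have hle : kostka (tildePart lam) mu ≤ kostkaMulti lam mu := by
    rw [kostka, kostkaMulti, ← himage]
    exact Set.ncard_image_le hfin
  refine ⟨hle, fun hone => le_antisymm (hone ▸ hle) ?_⟩
  have hne := Set.nonempty_of_ncard_ne_zero (hone.trans_ne one_ne_zero)
  rw [kostka, ← himage]
  exact (Set.ncard_pos (hfin.image _)).mpr (hne.image _)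

theorem stmt13 (r n : ℕ) (lam : Fin r → ℕ → ℕ) (mu : ℕ → ℕ)
    (hlp : ∀ j, IsPartition (lam j)) (hln : (∑ j, psize (lam j)) = n)
    (hmp : IsPartition mu) (hmn : psize mu = n) :
    kostka (tildePart lam) mu ≤ kostkaMulti lam mu ∧
      (kostkaMulti lam mu = 1 → kostka (tildePart lam) mu = 1) :=
  stmt13_general r lam mu hlp hmp
end

section
/- For any r-multipartition [λ(j)] of n, K_{[λ(j)] λ̃} = 1, where λ̃ is the partition with parts λ̃_i = Σ_{j=1}^r λ(j)_i. -/
lemma ncard_Iio (n : ℕ) : (Set.Iio n : Set ℕ).ncard = n := by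
  have : (Set.Iio n : Set ℕ) = ↑(Finset.Iio n) := by simp
  rw [this, Set.ncard_coe_finset]; simp

lemma row_lower {l : ℕ → ℕ} {T : ℕ → ℕ → ℕ} (h : IsSSYT l T) (hl : Antitone l) :
    ∀ i k, k < l i → i + 1 ≤ T i k := by
  intro i
  induction i with
  | zero => intro k hk; exact h.1 0 k hk
  | succ i ih =>
    intro k hk
    have hk' : k < l i := lt_of_lt_of_le hk (hl (Nat.le_succ i))
    have h1 := h.2.2.2 i (i+1) k (Nat.lt_succ_self i) hk
    have h2 := ih k hk'
    omega

lemma entryCount_row {l : ℕ → ℕ} {T : ℕ → ℕ → ℕ} {m : ℕ}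
    (h : ∀ i k, k < l i → T i k = m + 1 → i = m) :
    entryCount l T m = Set.ncard {k | k < l m ∧ T m k = m + 1} := by
  have hset : {p : ℕ × ℕ | p.2 < l p.1 ∧ T p.1 p.2 = m + 1}
      = (fun k => (m, k)) '' {k | k < l m ∧ T m k = m + 1} := by
    ext ⟨i, k⟩
    simp only [Set.mem_setOf_eq, Set.mem_image]
    constructor
    · rintro ⟨h1, h2⟩
      have := h i k h1 h2
      subst this
      exact ⟨k, ⟨h1, h2⟩, rfl⟩
    · rintro ⟨k', ⟨h1, h2⟩, heq⟩
      obtain ⟨rfl, rfl⟩ := Prod.mk.injEq .. ▸ heq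
      exact ⟨h1, h2⟩
  rw [entryCount, hset, Set.ncard_image_of_injective]
  intro a b hab
  simpa using congrArg Prod.snd hab

theorem stmt16 (r n : ℕ) (lam : Fin r → ℕ → ℕ)
    (hlp : ∀ j, IsPartition (lam j)) (hln : (∑ j, psize (lam j)) = n) :
    kostkaMulti lam (tildePart lam) = 1 := by
  classical
  set T0 : Fin r → ℕ → ℕ → ℕ := fun j i k => if k < lam j i then i + 1 else 0 with hT0def
  have hT0ssyt : ∀ j, IsSSYT (lam j) (T0 j) := by
    intro j
    refine ⟨?_, ?_, ?_, ?_⟩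
    · intro i k hk; simp [hT0def, hk]
    · intro i k hk; simp [hT0def, Nat.not_lt.2 hk]
    · intro i a b hab hb
      have ha : a < lam j i := lt_of_le_of_lt hab hb
      simp [hT0def, ha, hb]
    · intro i i' k hii' hk
      have hk' : k < lam j i := lt_of_lt_of_le hk ((hlp j).1 (le_of_lt hii'))
      simp [hT0def, hk, hk']
      omega
  have hT0count : ∀ j m, entryCount (lam j) (T0 j) m = lam j m := by
    intro j m
    have hrow : ∀ i k, k < lam j i → T0 j i k = m + 1 → i = m := by
      intro i k hk heq
      simp [hT0def, hk] at heq
      omega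
    rw [entryCount_row hrow]
    have hset : {k | k < lam j m ∧ T0 j m k = m + 1} = Set.Iio (lam j m) := by
      ext k
      simp only [Set.mem_setOf_eq, Set.mem_Iio]
      constructor
      · exact fun h => h.1
      · intro hk; exact ⟨hk, by simp [hT0def, hk]⟩
    rw [hset, ncard_Iio]
  have key : {T : Fin r → ℕ → ℕ → ℕ | (∀ j, IsSSYT (lam j) (T j)) ∧
      MultiHasWeight lam T (tildePart lam)} = {T0} := by
    ext T
    simp only [Set.mem_setOf_eq, Set.mem_singleton_iff]
    constructor
    · rintro ⟨hss, hw⟩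
      have main : ∀ m, ∀ j k, k < lam j m → T j m k = m + 1 := by
        intro m
        induction m using Nat.strong_induction_on with
        | _ m ih =>
          have hrow : ∀ (j : Fin r), ∀ i k, k < lam j i → T j i k = m + 1 → i = m := by
            intro j i k hk heq
            rcases lt_trichotomy i m with h | h | h
            · have := ih i h j k hk; omega
            · exact h
            · have := row_lower (hss j) (hlp j).1 i k hk; omega
          have hEC : ∀ j, entryCount (lam j) (T j) m
              = Set.ncard {k | k < lam j m ∧ T j m k = m + 1} :=
            fun j => entryCount_row (hrow j)
          have hsub : ∀ j, {k | k < lam j m ∧ T j m k = m + 1} ⊆ Set.Iio (lam j m) :=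
            fun j k hk => hk.1
          have hle : ∀ j, Set.ncard {k | k < lam j m ∧ T j m k = m + 1} ≤ lam j m := by
            intro j
            calc Set.ncard {k | k < lam j m ∧ T j m k = m + 1}
                ≤ (Set.Iio (lam j m)).ncard :=
                  Set.ncard_le_ncard (hsub j) (Set.finite_Iio _)
              _ = lam j m := ncard_Iio _
          have hsum : ∑ j, Set.ncard {k | k < lam j m ∧ T j m k = m + 1} = ∑ j, lam j m := by
            have h1 := hw m
            simp only [hEC] at h1
            exact h1
          have heach := (Finset.sum_eq_sum_iff_of_le (fun j _ => hle j)).1 hsum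
          intro j k hk
          have hset : {k | k < lam j m ∧ T j m k = m + 1} = Set.Iio (lam j m) := by
            refine Set.eq_of_subset_of_ncard_le (hsub j) ?_ (Set.finite_Iio _)
            rw [ncard_Iio, heach j (Finset.mem_univ j)]
          have hmem : k ∈ {k | k < lam j m ∧ T j m k = m + 1} := by
            rw [hset]; exact Set.mem_Iio.2 hk
          exact hmem.2
      funext j i k
      by_cases hk : k < lam j i
      · simp [hT0def, hk, main i j k hk]
      · simp [hT0def, hk, (hss j).2.1 i k (le_of_not_gt hk)]
    · rintro rfl
      exact ⟨hT0ssyt, fun m => by simp [hT0count, tildePart]⟩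
  rw [kostkaMulti, key, Set.ncard_singleton]
end
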